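/- arXiv:1706.08326 — 6 statements merged into one kernel-verified Lean document; each statement's English description precedes it below -/
import Mathlib

section
/- Let B be a unital C*-algebra, let A be a C*-subalgebra of B containing the unit 1 of B, and let T : A → B be a linear map which is a triple derivation at the unit 1. Then for every projection p ∈ A (i.e., p = p² = p*), the identity T(p) = T(p)p + pT(p) − pT(1)p holds. -/
/-- The C*-triple product `{a,b,c} = (1/2)(a b* c + c b* a)`. -/
noncomputable def trip {R : Type*} [NonUnitalRing R] [Module ℂ R] [Star R] (a b c : R) : R :=
  (2 : ℂ)⁻¹ • (a * star b * c + c * star b * a)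

/-- If `T : A → B` is a linear map on a C*-subalgebra `A` (containing the unit) of a unital
C*-algebra `B` which is a triple derivation at the unit, then for every projection `p ∈ A`,
`T(p) = T(p)p + pT(p) - pT(1)p`. -/
theorem stmt1 {B : Type*} [CStarAlgebra B] (A : StarSubalgebra ℂ B)
    (hA : IsClosed (A : Set B)) (T : A →ₗ[ℂ] B)
    (hT : ∀ a b c : A, trip (a : B) (b : B) (c : B) = 1 →
      T 1 = trip (T a) (b : B) (c : B) + trip (a : B) (T b) (c : B)
        + trip (a : B) (b : B) (T c)) :
    ∀ p : A, (p : B) * (p : B) = (p : B) → star (p : B) = (p : B) →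
      T p = T p * (p : B) + (p : B) * T p - (p : B) * T 1 * (p : B) := by
  intro p hp2 hps
  -- triple product of units is the unit
  have h111 : trip ((1:A):B) ((1:A):B) ((1:A):B) = 1 := by
    simp only [trip, OneMemClass.coe_one, star_one, mul_one, one_mul]
    rw [← two_smul ℂ (1:B), smul_smul]
    norm_num
  -- T 1 is skew
  have hskew : star (T 1) = - T 1 := by
    have h := hT 1 1 1 h111
    simp only [trip, OneMemClass.coe_one, mul_one, one_mul, star_one] at h
    linear_combination (norm := module) -h
  -- the symmetry u = 2p - 1
  set u : A := (2:ℂ) • p - 1 with hu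
  have huB : (u : B) = (2:ℂ) • (p:B) - 1 := by
    simp [hu]
  have huu : (u : B) * (u : B) = 1 := by
    rw [huB]
    simp only [sub_mul, mul_sub, smul_mul_assoc, mul_smul_comm, smul_smul, mul_one, one_mul, hp2]
    module
  have htrip : trip (u : B) ((1:A):B) (u : B) = 1 := by
    simp only [trip, OneMemClass.coe_one, star_one, mul_one]
    rw [huu, ← two_smul ℂ (1:B), smul_smul]
    norm_num
  have hTu : T u = (2:ℂ) • T p - T 1 := by
    rw [hu, map_sub, map_smul]
  have h := hT u 1 u htrip
  rw [hTu, huB] at h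
  simp only [trip, OneMemClass.coe_one, star_one, mul_one, one_mul, hskew,
    mul_sub, sub_mul, mul_add, add_mul, smul_mul_assoc, mul_smul_comm, smul_smul,
    mul_neg, neg_mul, smul_neg, mul_assoc, smul_sub, smul_add] at h
  simp only [mul_assoc]
  linear_combination (norm := module) ((4:ℂ)⁻¹) • h
end

section
/- Let A be a unital C*-algebra and let T : A → A be a continuous linear map which is a triple derivation at the unit 1 and satisfies T(1) = 0. Then T is a *-derivation and a triple derivation. -/
/-!
Feeding the pairs `a = 1 + t x`, `c = (1 + t x)⁻¹` (for which `a c + c a = 2`) into the identity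
at `1`, once as `{a, 1, c} = 1` and once as `{a, c*, 1} = 1`, and letting `t → 0`, shows that `T`
commutes with the involution and is a Jordan derivation: `T (x x) = T x x + x T x`.
By the C*-identity a C*-algebra is semiprime (`a A a = 0` forces `a = 0`), and by Brešar's
theorem a Jordan derivation of a 2-torsion-free semiprime ring is a derivation. Finally a
`*`-derivation preserves the triple product.
-/

def IsSemiprimeRing (R : Type*) [Mul R] [Zero R] : Prop :=
  ∀ a : R, (∀ x, a * x * a = 0) → a = 0

namespace IsSemiprimeRing

variable {R : Type*} [Ring R] (hR : IsSemiprimeRing R)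
include hR

lemma mul_mul_eq_zero_swap {a b : R} (h : ∀ x, a * x * b = 0) (x : R) : b * x * a = 0 :=
  hR _ fun y => by
    calc b * x * a * y * (b * x * a) = b * x * (a * y * b) * x * a := by noncomm_ring
      _ = 0 := by rw [h y]; noncomm_ring

lemma mul_mul_eq_zero_of_add [IsAddTorsionFree R] {a b : R}
    (h : ∀ x, a * x * b + b * x * a = 0) (x : R) : a * x * b = 0 := by
  have hab : ∀ x, a * x * b = -(b * x * a) := fun x => eq_neg_of_add_eq_zero_left (h x)
  -- the word `(a u b) v b w b`, rewritten in two ways, is its own negative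
  have hbba : ∀ u v w : R, b * u * b * v * (b * w * a) = 0 := by
    intro u v w
    have e1 : a * u * b * v * b = -(b * u * b * v * a) := by
      simpa only [mul_assoc] using hab (u * b * v)
    have e2 : a * u * b * (v * b * w) * b = -(b * u * b * v * (b * w * a)) := by
      simpa only [mul_assoc] using hab (u * b * (v * b * w))
    have e3 : a * u * b * (v * b * w) * b = b * u * b * v * (b * w * a) := by
      calc a * u * b * (v * b * w) * b = (a * u * b * v * b) * (w * b) := by noncomm_ring
        _ = -(b * u * b * v) * (a * w * b) := by rw [e1]; noncomm_ring
        _ = b * u * b * v * (b * w * a) := by rw [hab w]; noncomm_ring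
    rw [← two_nsmul_eq_zero, two_nsmul]
    nth_rewrite 1 [← e3]
    rw [e2, neg_add_cancel]
  have hbaab : ∀ v : R, b * x * a * v * (a * x * b) = 0 := fun v =>
    hR _ fun s => by
      calc b * x * a * v * (a * x * b) * s * (b * x * a * v * (a * x * b))
          = b * (x * a * v * a * x) * b * s * (b * x * a) * (v * (a * x * b)) := by noncomm_ring
        _ = 0 := by rw [hbba, zero_mul]
  exact hR _ fun v => by nth_rewrite 1 [hab x]; rw [neg_mul, neg_mul, hbaab, neg_zero]

lemma mul_mul_eq_zero_of_additive {M : Type*} [Add M] {f g : M → R}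
    (hf : ∀ m n, f (m + n) = f m + f n) (hg : ∀ m n, g (m + n) = g m + g n)
    (h : ∀ m x, f m * x * g m = 0) (m n : M) (x : R) : f m * x * g n = 0 := by
  have hmn : ∀ x, f m * x * g n = -(f n * x * g m) := by
    intro x
    refine eq_neg_of_add_eq_zero_left ?_
    have := h (m + n) x
    rw [hf, hg] at this
    calc f m * x * g n + f n * x * g m
        = (f m + f n) * x * (g m + g n) - f m * x * g m - f n * x * g n := by noncomm_ring
      _ = 0 := by rw [this, h, h]; abel
  refine hR _ fun y => ?_
  calc f m * x * g n * y * (f m * x * g n)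
      = -(f m * x * (g n * y * f n) * x * g m) := by nth_rewrite 2 [hmn x]; noncomm_ring
    _ = 0 := by rw [hR.mul_mul_eq_zero_swap (h n) y]; noncomm_ring

lemma commute_of_mul_mul_lie_eq_zero {c : R} (h : ∀ x u v : R, c * x * ⁅u, v⁆ = 0) (w : R) :
    Commute c w := by
  refine sub_eq_zero.mp (hR _ fun x => ?_)
  calc (c * w - w * c) * x * (c * w - w * c)
      = c * (w * x) * ⁅c, w⁆ - w * (c * x * ⁅c, w⁆) := by rw [Ring.lie_def]; noncomm_ring
    _ = 0 := by rw [h, h, mul_zero, sub_zero]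

lemma eq_zero_of_isNilpotent_of_commute {c : R} (hc : ∀ w, Commute c w) (hn : IsNilpotent c) :
    c = 0 := by
  obtain ⟨n, hn⟩ := hn
  induction n using Nat.strong_induction_on with
  | _ n ih =>
    rcases Nat.lt_or_ge n 2 with hlt | hge
    · interval_cases n
      · simpa using congrArg (· * c) hn
      · simpa using hn
    · refine ih (n - 1) (by omega) (hR _ fun z => ?_)
      calc c ^ (n - 1) * z * c ^ (n - 1) = c ^ n * (c ^ (n - 2) * z) := by
            rw [mul_assoc, ← ((hc z).pow_left _).eq, ← mul_assoc, ← mul_assoc, ← pow_add,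
              ← pow_add]
            congr 2; omega
        _ = 0 := by rw [hn, zero_mul]

end IsSemiprimeRing

def leibnizDefect {R : Type*} [Ring R] (D : R →+ R) (x y : R) : R := D (x * y) - D x * y - x * D y

def IsJordanDerivation {R : Type*} [Ring R] (D : R →+ R) : Prop :=
  ∀ x, D (x * x) = D x * x + x * D x

section JordanDerivation

variable {R : Type*} [Ring R] {D : R →+ R}

lemma leibnizDefect_add_left (x y z : R) :
    leibnizDefect D (x + y) z = leibnizDefect D x z + leibnizDefect D y z := by
  simp only [leibnizDefect, add_mul, map_add]; abel

lemma leibnizDefect_add_right (x y z : R) :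
    leibnizDefect D x (y + z) = leibnizDefect D x y + leibnizDefect D x z := by
  simp only [leibnizDefect, mul_add, map_add]; abel

namespace IsJordanDerivation

variable (hD : IsJordanDerivation D)
include hD

lemma map_mul_add_mul_swap (x y : R) :
    D (x * y + y * x) = D x * y + x * D y + (D y * x + y * D x) := by
  have e : x * y + y * x = (x + y) * (x + y) - x * x - y * y := by noncomm_ring
  rw [e, map_sub, map_sub, hD, hD, hD, map_add]
  noncomm_ring

lemma leibnizDefect_add_swap (x y : R) : leibnizDefect D x y + leibnizDefect D y x = 0 := by
  have := hD.map_mul_add_mul_swap x y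
  rw [map_add] at this
  simp only [leibnizDefect]
  rw [← sub_eq_zero] at this
  rw [← this]; abel

lemma map_lie (x y : R) : D ⁅x, y⁆ = 2 • leibnizDefect D x y + ⁅D x, y⁆ + ⁅x, D y⁆ := by
  have h := hD.leibnizDefect_add_swap x y
  simp only [leibnizDefect] at h ⊢
  rw [Ring.lie_def, Ring.lie_def, Ring.lie_def, map_sub, ← sub_eq_zero, ← neg_eq_zero, ← h]
  abel

variable [IsAddTorsionFree R]

lemma map_mul_mul_self (x y : R) : D (x * y * x) = D x * y * x + x * D y * x + x * y * D x := by
  refine (nsmul_right_inj two_ne_zero).mp ?_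
  have e : 2 • (x * y * x) =
      (x * (x * y + y * x) + (x * y + y * x) * x) - (x * x * y + y * (x * x)) := by
    rw [two_nsmul]; noncomm_ring
  rw [← map_nsmul, e, map_sub, hD.map_mul_add_mul_swap x, hD.map_mul_add_mul_swap (x * x),
    hD.map_mul_add_mul_swap x y, hD, two_nsmul]
  noncomm_ring

lemma map_mul_mul_add (x y z : R) :
    D (x * y * z + z * y * x) = D x * y * z + x * D y * z + x * y * D z
      + (D z * y * x + z * D y * x + z * y * D x) := by
  have e : x * y * z + z * y * x = (x + z) * y * (x + z) - x * y * x - z * y * z := by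
    noncomm_ring
  rw [e, map_sub, map_sub, hD.map_mul_mul_self, hD.map_mul_mul_self, hD.map_mul_mul_self, map_add]
  noncomm_ring

lemma leibnizDefect_mul_mul_lie_add (x y z : R) :
    leibnizDefect D x y * z * ⁅x, y⁆ + ⁅x, y⁆ * z * leibnizDefect D x y = 0 := by
  have hyx : D (y * x) = D x * y + x * D y + (D y * x + y * D x) - D (x * y) := by
    rw [← hD.map_mul_add_mul_swap, map_add, add_sub_cancel_left]
  -- expand `D` of `(xy) z (yx) + (yx) z (xy) = x (yzy) x + y (xzx) y` in both ways
  have E := hD.map_mul_mul_add (x * y) z (y * x)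
  rw [show x * y * z * (y * x) + y * x * z * (x * y) = x * (y * z * y) * x + y * (x * z * x) * y by
    noncomm_ring, map_add, hD.map_mul_mul_self, hD.map_mul_mul_self, hD.map_mul_mul_self,
    hD.map_mul_mul_self, hyx] at E
  refine Eq.trans ?_ (sub_eq_zero.mpr E)
  simp only [leibnizDefect, Ring.lie_def]
  noncomm_ring

variable (hR : IsSemiprimeRing R)
include hR

lemma leibnizDefect_mul_mul_lie (x y z u v : R) : leibnizDefect D x y * z * ⁅u, v⁆ = 0 := by
  have hxy : ∀ x y z : R, leibnizDefect D x y * z * ⁅x, y⁆ = 0 := fun x y =>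
    hR.mul_mul_eq_zero_of_add (hD.leibnizDefect_mul_mul_lie_add x y)
  have hxu : ∀ x u y z : R, leibnizDefect D x y * z * ⁅u, y⁆ = 0 := fun x u y =>
    hR.mul_mul_eq_zero_of_additive (f := (leibnizDefect D · y)) (g := (⁅·, y⁆))
      (fun _ _ => leibnizDefect_add_left _ _ _)
      (fun _ _ => by simp only [Ring.lie_def, add_mul, mul_add]; abel) (hxy · y) x u
  exact hR.mul_mul_eq_zero_of_additive (f := leibnizDefect D x) (g := (⁅u, ·⁆))
    (leibnizDefect_add_right x) (fun _ _ => by simp only [Ring.lie_def, add_mul, mul_add]; abel)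
    (hxu x u) y v z

theorem map_mul (x y : R) : D (x * y) = D x * y + x * D y := by
  set c := leibnizDefect D x y with hc
  have hl : ∀ z u v, c * z * ⁅u, v⁆ = 0 := hD.leibnizDefect_mul_mul_lie hR x y
  have hr : ∀ z u v, ⁅u, v⁆ * z * c = 0 := fun z u v =>
    hR.mul_mul_eq_zero_swap (fun z => hl z u v) z
  have hl1 : ∀ u v, c * ⁅u, v⁆ = 0 := fun u v => by simpa using hl 1 u v
  have hr1 : ∀ u v, ⁅u, v⁆ * c = 0 := fun u v => by simpa using hr 1 u v
  have hcD : c * D ⁅x, y⁆ = 2 • (c * c) := by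
    rw [hD.map_lie, mul_add, mul_add, hl1, hl1, add_zero, add_zero, mul_smul_comm]
  -- `c` kills commutators on both sides, so only `4 c³` survives below
  have hc3 : 4 • (c * c * c) = 0 :=
    calc 4 • (c * c * c)
        = c * (D ⁅x, y⁆ * c + ⁅x, y⁆ * D c + (D c * ⁅x, y⁆ + c * D ⁅x, y⁆)) := by
          rw [mul_add, mul_add, mul_add, ← mul_assoc c (D _), hcD, ← mul_assoc c ⁅x, y⁆, hl1,
            ← mul_assoc c (D c), hl]
          noncomm_ring
      _ = c * D (⁅x, y⁆ * c + c * ⁅x, y⁆) := by rw [hD.map_mul_add_mul_swap]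
      _ = 0 := by rw [hl1, hr1, add_zero, map_zero, mul_zero]
  have hc0 : c = 0 := hR.eq_zero_of_isNilpotent_of_commute (hR.commute_of_mul_mul_lie_eq_zero hl)
    ⟨3, by rwa [pow_succ, pow_two, ← nsmul_eq_zero_iff_right four_ne_zero]⟩
  rwa [hc, leibnizDefect, sub_sub, sub_eq_zero] at hc0

end IsJordanDerivation
end JordanDerivation

def IsTripleDerivationAt {R : Type*} [NonUnitalRing R] [Module ℂ R] [Star R]
    (T : R →ₗ[ℂ] R) (z : R) : Prop :=
  ∀ a b c : R, trip a b c = z → T z = trip (T a) b c + trip a (T b) c + trip a b (T c)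

lemma jordan_inv_expansion_one_add_smul {𝕜 A : Type*} [CommRing 𝕜] [Ring A] [Algebra 𝕜 A]
    {T : A →ₗ[𝕜] A} (h1 : T 1 = 0) (x v : A) (t : 𝕜) (hv : (1 + t • x) * v = 1) :
    T (1 + t • x) * v + v * T (1 + t • x) + ((1 + t • x) * T v + T v * (1 + t • x)) =
      t ^ 2 • ((2 : 𝕜) • T (x * (x * v)) - T x * (x * v) - x * v * T x - x * T (x * v)
        - T (x * v) * x) := by
  set p := x * v with hp
  have hv' : v = 1 - t • p := eq_sub_of_add_eq (by rwa [add_mul, one_mul, smul_mul_assoc] at hv)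
  have hTv : T v = -(t • T p) := by rw [hv', map_sub, h1, map_smul, zero_sub]
  have hp' : p = x - t • (x * p) := by
    nth_rewrite 1 [hp]; rw [hv', mul_sub, mul_one, mul_smul_comm]
  have hTp : T x = T p + t • T (x * p) := by
    rw [← sub_eq_iff_eq_add, ← map_smul, ← map_sub, ← hp']
  rw [map_add, h1, map_smul, zero_add, hTv, hv', hTp]
  simp only [mul_add, add_mul, mul_sub, sub_mul, smul_mul_assoc, mul_smul_comm, smul_add,
    smul_sub, smul_smul, mul_one, one_mul, mul_neg, neg_mul, smul_neg]
  module

open Filter Topology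

lemma eventually_isUnit_one_add_smul {𝕜 A : Type*} [NontriviallyNormedField 𝕜] [NormedRing A]
    [NormedAlgebra 𝕜 A] [HasSummableGeomSeries A] (x : A) :
    ∀ᶠ t in 𝓝[≠] (0 : 𝕜), IsUnit (1 + t • x) ∧ t ≠ 0 := by
  have hc : Continuous fun t : 𝕜 => 1 + t • x := by fun_prop
  have h : ∀ᶠ t in 𝓝 (0 : 𝕜), IsUnit (1 + t • x) :=
    hc.continuousAt.eventually_mem (s := {y : A | IsUnit y}) (Units.isOpen.mem_nhds (by simp))
  exact (eventually_nhdsWithin_of_eventually_nhds h).and self_mem_nhdsWithin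

lemma inv_two_smul_two {R : Type*} [Ring R] [Module ℂ R] : (2 : ℂ)⁻¹ • (2 : R) = 1 := by
  rw [inv_smul_eq_iff₀ two_ne_zero, two_smul, one_add_one_eq_two]

section TripleDerivationAt

variable {R : Type*} [Ring R] [StarRing R] [Module ℂ R] {T : R →ₗ[ℂ] R}

lemma trip_one_middle (a c : R) : trip a 1 c = (2 : ℂ)⁻¹ • (a * c + c * a) := by
  simp [trip]

lemma trip_one_right (a b : R) : trip a b 1 = (2 : ℂ)⁻¹ • (a * star b + star b * a) := by
  simp [trip]

namespace IsTripleDerivationAt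

variable (hT : IsTripleDerivationAt T 1) (h1 : T 1 = 0)
include hT h1

lemma add_eq_zero_of_add_eq_two {a c : R} (hac : a * c + c * a = 2) :
    T a * c + c * T a + (a * T c + T c * a) = 0 := by
  have h := hT a 1 c (by rw [trip_one_middle, hac, inv_two_smul_two])
  rw [h1, trip_one_middle, trip_one_middle, show trip a 0 c = 0 by simp [trip], add_zero,
    ← smul_add, eq_comm, smul_eq_zero] at h
  exact h.resolve_left (by norm_num)

lemma add_star_eq_zero_of_add_eq_two {a c : R} (hac : a * c + c * a = 2) :
    T a * c + c * T a + (a * star (T (star c)) + star (T (star c)) * a) = 0 := by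
  have h := hT a (star c) 1 (by rw [trip_one_right, star_star, hac, inv_two_smul_two])
  rw [h1, trip_one_right, trip_one_right, star_star,
    show trip a (star c) 0 = 0 by simp [trip], add_zero, ← smul_add, eq_comm, smul_eq_zero] at h
  exact h.resolve_left (by norm_num)

end IsTripleDerivationAt
end TripleDerivationAt

section CStarAlgebra

variable {A : Type*} [CStarAlgebra A] {T : A →ₗ[ℂ] A}

namespace IsTripleDerivationAt

variable (hT : IsTripleDerivationAt T 1) (h1 : T 1 = 0)
include hT h1

lemma star_map_star_eq (x : A) : star (T (star x)) = T x := by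
  set S : A → A := fun y => star (T (star y)) - T y with hS
  have hunit : ∀ w : Aˣ, ↑w * S w + S w * ↑w = 0 := by
    intro w
    have h : (↑w⁻¹ : A) * S w + S w * ↑w⁻¹ = 0 := by
      have hac : (↑w⁻¹ : A) * ↑w + ↑w * ↑w⁻¹ = 2 := by simp [one_add_one_eq_two]
      rw [← sub_eq_zero.mpr ((hT.add_star_eq_zero_of_add_eq_two h1 hac).trans
        (hT.add_eq_zero_of_add_eq_two h1 hac).symm)]
      simp only [hS, mul_sub, sub_mul]; abel
    calc (↑w : A) * S w + S w * ↑w = ↑w * (↑w⁻¹ * S w + S w * ↑w⁻¹) * ↑w := by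
          simp only [mul_add, add_mul, ← mul_assoc, Units.mul_inv, one_mul]
          simp only [mul_assoc, Units.inv_mul, mul_one]; abel
      _ = 0 := by rw [h, mul_zero, zero_mul]
  have hlin : ∀ t : ℂ, S (1 + t • x) = t • S x := fun t => by
    simp [hS, star_smul, h1, smul_sub]
  set φ : ℂ → A := fun t => (2 : ℂ) • S x + t • (x * S x + S x * x) with hφ
  have hev : ∀ᶠ t in 𝓝[≠] 0, φ t = 0 := by
    filter_upwards [eventually_isUnit_one_add_smul x] with t ⟨⟨w, hw⟩, ht⟩
    have h := hunit w
    rw [hw, hlin] at h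
    refine (smul_eq_zero.mp ?_).resolve_left ht
    rw [← h, hφ]
    simp only [mul_add, add_mul, smul_add, smul_mul_assoc, mul_smul_comm, smul_smul, mul_one,
      one_mul]
    module
  have hφc : ContinuousAt φ 0 := by fun_prop
  have h0 : φ 0 = 0 := (hφc.eventuallyEq_nhds_iff_eventuallyEq_nhdsNE continuousAt_const).1 hev
    |>.eq_of_nhds
  simp only [hφ, zero_smul, add_zero, smul_eq_zero] at h0
  exact sub_eq_zero.mp (h0.resolve_left two_ne_zero)

lemma map_star (x : A) : T (star x) = star (T x) := by
  simpa using (hT.star_map_star_eq h1 (star x)).symm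

lemma isJordanDerivation (hcont : Continuous T) : IsJordanDerivation T.toAddMonoidHom := by
  intro x
  set p : ℂ → A := fun t => x * Ring.inverse (1 + t • x) with hp
  have hpc : ContinuousAt p 0 := by
    have h := NormedRing.inverse_continuousAt (1 : Aˣ)
    rw [Units.val_one] at h
    exact continuousAt_const.mul (h.comp_of_eq (by fun_prop) (by simp))
  set φ : ℂ → A := fun t =>
    (2 : ℂ) • T (x * p t) - T x * p t - p t * T x - x * T (p t) - T (p t) * x with hφ
  have hev : ∀ᶠ t in 𝓝[≠] 0, φ t = 0 := by
    filter_upwards [eventually_isUnit_one_add_smul x] with t ⟨hu, ht⟩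
    have hac : (1 + t • x) * Ring.inverse (1 + t • x) + Ring.inverse (1 + t • x) * (1 + t • x)
        = 2 := by
      rw [Ring.mul_inverse_cancel _ hu, Ring.inverse_mul_cancel _ hu, one_add_one_eq_two]
    have h := hT.add_eq_zero_of_add_eq_two h1 hac
    rw [jordan_inv_expansion_one_add_smul h1 x _ t (Ring.mul_inverse_cancel _ hu)] at h
    exact (smul_eq_zero.mp h).resolve_left (pow_ne_zero 2 ht)
  have hφc : ContinuousAt φ 0 := by fun_prop
  have h0 : φ 0 = 0 := (hφc.eventuallyEq_nhds_iff_eventuallyEq_nhdsNE continuousAt_const).1 hev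
    |>.eq_of_nhds
  simp only [hφ, hp, zero_smul, add_zero, Ring.inverse_one, mul_one] at h0
  have h2 : (2 : ℂ) • (T (x * x) - (T x * x + x * T x)) = 0 := by rw [← h0]; module
  exact sub_eq_zero.mp ((smul_eq_zero.mp h2).resolve_left two_ne_zero)

end IsTripleDerivationAt
end CStarAlgebra

lemma CStarRing.isSemiprimeRing {A : Type*} [NonUnitalNormedRing A] [StarRing A] [CStarRing A] :
    IsSemiprimeRing A := by
  intro a h
  have h' : star (star a * a) * (star a * a) = 0 := by
    rw [star_mul, star_star, mul_assoc, ← mul_assoc a, h, mul_zero]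
  exact (CStarRing.star_mul_self_eq_zero_iff a).1 ((CStarRing.star_mul_self_eq_zero_iff _).1 h')

lemma map_trip_of_map_mul_of_map_star {R : Type*} [Ring R] [StarRing R] [Module ℂ R]
    (T : R →ₗ[ℂ] R) (hmul : ∀ x y, T (x * y) = T x * y + x * T y)
    (hstar : ∀ x, T (star x) = star (T x)) (a b c : R) :
    T (trip a b c) = trip (T a) b c + trip a (T b) c + trip a b (T c) := by
  simp only [trip, map_smul, map_add, hmul, hstar, ← smul_add]
  congr 1
  noncomm_ring

/-- A continuous linear map `T` on a unital C*-algebra which is a triple derivation at the unit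
and satisfies `T(1) = 0` is a `*`-derivation and a triple derivation. -/
theorem stmt3 {A : Type*} [CStarAlgebra A] (T : A →ₗ[ℂ] A) (hcont : Continuous T)
    (hT : ∀ a b c : A, trip a b c = 1 →
      T 1 = trip (T a) b c + trip a (T b) c + trip a b (T c))
    (h1 : T 1 = 0) :
    (∀ x y : A, T (x * y) = T x * y + x * T y) ∧
    (∀ x : A, T (star x) = star (T x)) ∧
    (∀ a b c : A, T (trip a b c) = trip (T a) b c + trip a (T b) c + trip a b (T c)) := by
  have : IsAddTorsionFree A := .of_isTorsionFree ℂ A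
  have hmul : ∀ x y : A, T (x * y) = T x * y + x * T y :=
    (IsTripleDerivationAt.isJordanDerivation hT h1 hcont).map_mul CStarRing.isSemiprimeRing
  have hstar : ∀ x : A, T (star x) = star (T x) := IsTripleDerivationAt.map_star hT h1
  exact ⟨hmul, hstar, map_trip_of_map_mul_of_map_star T hmul hstar⟩
end

section
/- Let A be a C*-subalgebra of a C*-algebra B, and let T : A → B be a linear map which is a triple derivation at zero. Then {a, T(b), c} = 0 for all a, b, c ∈ A such that a is orthogonal to b and b is orthogonal to c (i.e., ab* = b*a = 0 and cb* = b*c = 0). -/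
/-- If `T : A → B` is a linear map on a C*-subalgebra `A` of a C*-algebra `B` which is a
triple derivation at zero, then `{a, T(b), c} = 0` whenever `a ⊥ b` and `b ⊥ c` in `A`. -/
theorem stmt6 {B : Type*} [NonUnitalCStarAlgebra B] (A : NonUnitalStarSubalgebra ℂ B)
    (hA : IsClosed (A : Set B)) (T : A →ₗ[ℂ] B)
    (hT : ∀ a b c : A, trip (a : B) (b : B) (c : B) = 0 →
      trip (T a) (b : B) (c : B) + trip (a : B) (T b) (c : B)
        + trip (a : B) (b : B) (T c) = 0) :
    ∀ a b c : A, (a : B) * star (b : B) = 0 → star (b : B) * (a : B) = 0 →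
      (c : B) * star (b : B) = 0 → star (b : B) * (c : B) = 0 →
      trip (a : B) (T b) (c : B) = 0 := by
  intro a b c hab hba hcb hbc
  have h0 : trip (a : B) (b : B) (c : B) = 0 := by
    simp [trip, hab, hcb]
  have h := hT a b c h0
  have h1 : trip (T a) (b : B) (c : B) = 0 := by
    simp [trip, mul_assoc, hbc, hcb]
  have h3 : trip (a : B) (b : B) (T c) = 0 := by
    simp [trip, mul_assoc, hab, hba]
  rw [h1, h3, zero_add, add_zero] at h
  exact h
end

section
/- Let B be a unital C*-algebra, let A be a C*-subalgebra of B containing the unit 1 of B, and let T : A → B be a bounded linear map which is a derivation at zero. Then T is a generalized derivation, that is, T(xy) = T(x)y + xT(y) − xT(1)y for all x, y ∈ A. -/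
/-!
The map `φ a b = T a * b + a * T b` is a continuous bilinear map on the C*-algebra `A` that
vanishes on pairs with zero product. Every such map satisfies `Φ (x * y) 1 = Φ x y`; for `φ`,
taking `x = 1` shows that `T 1` commutes with `A`, and the identity for general `x, y` is then
the claimed formula.

It suffices to show `Φ h 1 = Φ 1 h` for self-adjoint `h`. The functions `tent (t - i)`, `i ∈ ℤ`,
form a partition of unity whose piecewise-linear interpolation of the identity is exact, so
`eᵢ = tent (h - i)` satisfy `∑ eᵢ = 1` and `∑ i • eᵢ = h`, and `eᵢ eⱼ = 0` once `|i - j| ≥ 2`.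
Hence `Φ h 1 - Φ 1 h = ∑ (i - j) • Φ eᵢ eⱼ` with only `|i - j| ≤ 1` contributing; there `i - j`
is determined by `i - j mod 3`, so grouping indices by residue mod 3 gives nine terms
`± Φ E_r E_s` with `‖E_r‖ ≤ 1`. The resulting bound `‖Φ h 1 - Φ 1 h‖ ≤ 9 ‖Φ‖`, applied to
`n • h`, forces `Φ h 1 = Φ 1 h`.
-/

open Finset

noncomputable def tent (t : ℝ) : ℝ := max 0 (1 - |t|)

@[fun_prop]
lemma continuous_tent : Continuous tent := by
  unfold tent; fun_prop

lemma tent_nonneg (t : ℝ) : 0 ≤ tent t := le_max_left _ _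

lemma tent_eq_zero {t : ℝ} (ht : 1 ≤ |t|) : tent t = 0 :=
  max_eq_left (by linarith)

lemma tent_sub_mul_tent_sub_eq_zero {i j : ℤ} (hij : 2 ≤ |i - j|) (t : ℝ) :
    tent (t - i) * tent (t - j) = 0 := by
  have hij' : (2 : ℝ) ≤ |(i : ℝ) - j| := by exact_mod_cast hij
  have : 1 ≤ |t - i| ∨ 1 ≤ |t - j| := by
    by_contra! h
    have htri := abs_sub_le (i : ℝ) t j
    rw [abs_sub_comm (i : ℝ) t] at htri
    linarith [h.1, h.2]
  rcases this with h | h <;> simp [tent_eq_zero h]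

lemma sum_mul_tent_sub {N : ℕ} {t : ℝ} (ht : |t| < N) (g : ℤ → ℝ) :
    ∑ i ∈ Icc (-N : ℤ) N, g i * tent (t - i) =
      (1 - Int.fract t) * g ⌊t⌋ + Int.fract t * g (⌊t⌋ + 1) := by
  rw [abs_lt] at ht
  have hsub : {⌊t⌋, ⌊t⌋ + 1} ⊆ Icc (-N : ℤ) N := by
    have h1 : -(N : ℤ) ≤ ⌊t⌋ := Int.le_floor.2 (by push_cast; linarith)
    have h2 : ⌊t⌋ < N := Int.floor_lt.2 (by push_cast; linarith)
    intro i hi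
    simp only [mem_insert, mem_singleton] at hi
    rw [mem_Icc]
    omega
  rw [← sum_subset hsub]
  · rw [sum_pair (by omega), mul_comm (g _), mul_comm (g _)]
    congr 2
    · rw [tent, Int.self_sub_floor, abs_of_nonneg (Int.fract_nonneg t)]
      exact max_eq_right (by linarith [Int.fract_lt_one t])
    · rw [tent, Int.cast_add, Int.cast_one, ← sub_sub, Int.self_sub_floor,
        abs_of_neg (by linarith [Int.fract_lt_one t] : Int.fract t - 1 < 0)]
      rw [max_eq_right (by linarith [Int.fract_nonneg t])]
      ring
  · intro i _ hi
    simp only [mem_insert, mem_singleton, not_or] at hi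
    rw [tent_eq_zero, mul_zero]
    have h1 : (⌊t⌋ : ℝ) ≤ t := Int.floor_le t
    have h2 : t < ⌊t⌋ + 1 := Int.lt_floor_add_one t
    rcases lt_or_gt_of_ne hi.1 with h | h
    · have : (i : ℝ) ≤ ⌊t⌋ - 1 := by exact_mod_cast (by omega : i ≤ ⌊t⌋ - 1)
      rw [abs_of_pos (by linarith)]; linarith
    · have : (⌊t⌋ : ℝ) + 2 ≤ i := by exact_mod_cast (by omega : ⌊t⌋ + 2 ≤ i)
      rw [abs_of_neg (by linarith)]; linarith

lemma sum_tent_sub {N : ℕ} {t : ℝ} (ht : |t| < N) :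
    ∑ i ∈ Icc (-N : ℤ) N, tent (t - i) = 1 := by
  simpa using sum_mul_tent_sub ht (fun _ => 1)

lemma sum_intCast_mul_tent_sub {N : ℕ} {t : ℝ} (ht : |t| < N) :
    ∑ i ∈ Icc (-N : ℤ) N, (i : ℝ) * tent (t - i) = t := by
  rw [sum_mul_tent_sub ht (fun i => (i : ℝ))]
  push_cast
  linear_combination Int.floor_add_fract t

lemma sum_sub_zsmul_eq_sum_valMinAbs {M : Type*} [AddCommGroup M] (I : Finset ℤ)
    (v : ℤ → ℤ → M) (hv : ∀ i j, 2 ≤ |i - j| → v i j = 0) :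
    ∑ i ∈ I, ∑ j ∈ I, (i - j) • v i j =
      ∑ r : ZMod 3, ∑ s : ZMod 3,
        (r - s).valMinAbs • ∑ i ∈ I with ((i : ℤ) : ZMod 3) = r,
          ∑ j ∈ I with ((j : ℤ) : ZMod 3) = s, v i j := by
  -- for `|i - j| ≤ 1` the residue of `i - j` mod 3 determines `i - j`
  have hcoef : ∀ i j : ℤ, (i - j) • v i j = ((i : ZMod 3) - j).valMinAbs • v i j := by
    intro i j
    by_cases h : 2 ≤ |i - j|
    · simp [hv i j h]
    · congr 1
      rw [← Int.cast_sub, eq_comm, ZMod.valMinAbs_spec]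
      refine ⟨rfl, ?_⟩
      rw [not_le, abs_lt] at h
      constructor <;> push_cast <;> omega
  simp_rw [hcoef, smul_sum]
  rw [← sum_fiberwise I (fun i : ℤ => (i : ZMod 3))]
  refine sum_congr rfl fun r _ => ?_
  rw [sum_comm (s := univ)]
  refine sum_congr rfl fun i hi => ?_
  rw [← sum_fiberwise I (fun i : ℤ => (i : ZMod 3))]
  refine sum_congr rfl fun s _ => sum_congr rfl fun j hj => ?_
  rw [(mem_filter.1 hi).2, (mem_filter.1 hj).2]

lemma norm_valMinAbs_le_one (x : ZMod 3) : ‖x.valMinAbs‖ ≤ 1 := by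
  have := ZMod.natAbs_valMinAbs_le x
  rw [Int.norm_eq_abs, ← Int.cast_abs, Int.abs_eq_natAbs]
  exact_mod_cast this

section TentPartition

variable {𝓐 : Type*} [CStarAlgebra 𝓐]

lemma sum_cfc_tent_sub {a : 𝓐} (ha : IsSelfAdjoint a) {N : ℕ}
    (hN : ∀ t ∈ spectrum ℝ a, |t| < N) :
    ∑ i ∈ Icc (-N : ℤ) N, cfc (fun t => tent (t - i)) a = 1 := by
  rw [← cfc_sum _ _ _ (fun i _ => by fun_prop), ← cfc_one ℝ a]
  refine cfc_congr fun t ht => ?_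
  simp only [Finset.sum_apply, Pi.one_apply]
  exact sum_tent_sub (hN t ht)

lemma sum_zsmul_cfc_tent_sub {a : 𝓐} (ha : IsSelfAdjoint a) {N : ℕ}
    (hN : ∀ t ∈ spectrum ℝ a, |t| < N) :
    ∑ i ∈ Icc (-N : ℤ) N, i • cfc (fun t => tent (t - i)) a = a := by
  have hsmul (i : ℤ) : i • cfc (fun t => tent (t - i)) a = cfc (fun t => i • tent (t - i)) a :=
    (cfc_smul i _ a).symm
  simp_rw [hsmul]
  rw [← cfc_sum _ _ _ (fun i _ => by fun_prop)]
  nth_rewrite 2 [← cfc_id' ℝ a]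
  refine cfc_congr fun t ht => ?_
  simp only [Finset.sum_apply, zsmul_eq_mul]
  exact sum_intCast_mul_tent_sub (hN t ht)

lemma cfc_tent_sub_mul_cfc_tent_sub (a : 𝓐) {i j : ℤ} (hij : 2 ≤ |i - j|) :
    cfc (fun t => tent (t - i)) a * cfc (fun t => tent (t - j)) a = 0 := by
  rw [← cfc_mul (fun t => tent (t - i)) (fun t => tent (t - j)) a]
  simp [tent_sub_mul_tent_sub_eq_zero hij]

lemma norm_sum_cfc_tent_sub_le {a : 𝓐} {N : ℕ} (hN : ∀ t ∈ spectrum ℝ a, |t| < N)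
    {S : Finset ℤ} (hS : S ⊆ Icc (-N : ℤ) N) :
    ‖∑ i ∈ S, cfc (fun t => tent (t - i)) a‖ ≤ 1 := by
  rw [← cfc_sum _ _ _ (fun i _ => by fun_prop)]
  refine norm_cfc_le zero_le_one fun t ht => ?_
  rw [← sum_tent_sub (hN t ht), Finset.sum_apply,
    Real.norm_of_nonneg (sum_nonneg fun i _ => tent_nonneg _)]
  exact sum_le_sum_of_subset_of_nonneg hS fun i _ _ => tent_nonneg _

end TentPartition

section ZeroProduct

variable {𝓐 X : Type*} [CStarAlgebra 𝓐] [NormedAddCommGroup X] [NormedSpace ℂ X]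
  (Φ : 𝓐 →L[ℂ] 𝓐 →L[ℂ] X)

lemma apply_sum_zsmul_sub_apply_sum_zsmul (I : Finset ℤ) (e : ℤ → 𝓐) :
    Φ (∑ i ∈ I, i • e i) (∑ j ∈ I, e j) - Φ (∑ i ∈ I, e i) (∑ j ∈ I, j • e j) =
      ∑ i ∈ I, ∑ j ∈ I, (i - j) • Φ (e i) (e j) := by
  simp only [map_sum, map_zsmul, _root_.sum_apply, smul_apply, smul_sum, sub_smul,
    sum_sub_distrib]
  rw [sum_comm (s := I) (t := I) (f := fun i j => i • Φ (e i) (e j))]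
  congr 1
  exact sum_comm

lemma norm_apply_one_sub_one_apply_le (hΦ : ∀ a b, a * b = 0 → Φ a b = 0) {a : 𝓐}
    (ha : IsSelfAdjoint a) :
    ‖Φ a 1 - Φ 1 a‖ ≤ 9 * ‖Φ‖ := by
  nontriviality 𝓐 using Subsingleton.elim a 1
  obtain ⟨N, hN⟩ := exists_nat_gt ‖a‖
  have hspec : ∀ t ∈ spectrum ℝ a, |t| < N := fun t ht =>
    (spectrum.norm_le_norm_of_mem ht).trans_lt hN
  set I := Icc (-N : ℤ) N
  set e : ℤ → 𝓐 := fun i => cfc (fun t => tent (t - i)) a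
  have hdecomp := apply_sum_zsmul_sub_apply_sum_zsmul Φ I e
  rw [sum_zsmul_cfc_tent_sub ha hspec, sum_cfc_tent_sub ha hspec,
    sum_sub_zsmul_eq_sum_valMinAbs _ _ fun i j hij => hΦ _ _
      (cfc_tent_sub_mul_cfc_tent_sub a hij)] at hdecomp
  rw [hdecomp]
  have hterm (r s : ZMod 3) : ‖(r - s).valMinAbs •
      ∑ i ∈ I with ((i : ℤ) : ZMod 3) = r, ∑ j ∈ I with ((j : ℤ) : ZMod 3) = s,
        Φ (e i) (e j)‖ ≤ ‖Φ‖ := by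
    have hE (r : ZMod 3) : ‖∑ i ∈ I with ((i : ℤ) : ZMod 3) = r, e i‖ ≤ 1 :=
      norm_sum_cfc_tent_sub_le hspec (filter_subset _ _)
    simp only [← _root_.sum_apply, ← map_sum]
    calc _ ≤ ‖(r - s).valMinAbs‖ * (‖Φ‖ * ‖∑ i ∈ I with ((i : ℤ) : ZMod 3) = r, e i‖ *
          ‖∑ j ∈ I with ((j : ℤ) : ZMod 3) = s, e j‖) :=
          (norm_zsmul_le _ _).trans (by gcongr; exact Φ.le_opNorm₂ _ _)
      _ ≤ 1 * (‖Φ‖ * 1 * 1) := by gcongr <;> simp only [norm_valMinAbs_le_one, hE]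
      _ = ‖Φ‖ := by ring
  calc _ ≤ ∑ r : ZMod 3, ∑ s : ZMod 3, ‖Φ‖ :=
        (norm_sum_le _ _).trans (sum_le_sum fun r _ => (norm_sum_le _ _).trans
          (sum_le_sum fun s _ => hterm r s))
    _ = 9 * ‖Φ‖ := by simp only [sum_const, card_univ, ZMod.card, nsmul_eq_mul]; ring

lemma apply_one_eq_one_apply_of_isSelfAdjoint (hΦ : ∀ a b, a * b = 0 → Φ a b = 0) {a : 𝓐}
    (ha : IsSelfAdjoint a) :
    Φ a 1 = Φ 1 a := by
  have hbound (n : ℕ) : n * ‖Φ a 1 - Φ 1 a‖ ≤ 9 * ‖Φ‖ := by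
    have := norm_apply_one_sub_one_apply_le Φ hΦ (a := n • a)
      (by rw [IsSelfAdjoint, star_nsmul, ha.star_eq])
    rwa [map_nsmul, map_nsmul, smul_apply, ← smul_sub, RCLike.norm_nsmul ℂ,
      nsmul_eq_mul] at this
  by_contra hne
  have hpos : 0 < ‖Φ a 1 - Φ 1 a‖ := norm_pos_iff.2 (sub_ne_zero.2 hne)
  obtain ⟨n, hn⟩ := exists_nat_gt (9 * ‖Φ‖ / ‖Φ a 1 - Φ 1 a‖)
  rw [div_lt_iff₀ hpos] at hn
  linarith [hbound n]

lemma apply_one_eq_one_apply (hΦ : ∀ a b, a * b = 0 → Φ a b = 0) (a : 𝓐) :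
    Φ a 1 = Φ 1 a := by
  rw [← realPart_add_I_smul_imaginaryPart a]
  simp only [map_add, map_smul, add_apply, smul_apply,
    apply_one_eq_one_apply_of_isSelfAdjoint Φ hΦ (realPart a).prop,
    apply_one_eq_one_apply_of_isSelfAdjoint Φ hΦ (imaginaryPart a).prop]

lemma apply_mul_one_eq_apply (hΦ : ∀ a b, a * b = 0 → Φ a b = 0) (x y : 𝓐) :
    Φ (x * y) 1 = Φ x y := by
  have := apply_one_eq_one_apply (Φ.comp (ContinuousLinearMap.mul ℂ 𝓐 x))
    (fun a b hab => hΦ _ _ (show x * a * b = 0 by rw [mul_assoc, hab, mul_zero])) y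
  simpa using this

end ZeroProduct

/-- A bounded linear map `T : A → B` on a C*-subalgebra `A` (containing the unit) of a unital
C*-algebra `B` which is a derivation at zero is a generalized derivation. -/
theorem stmt7 {B : Type*} [CStarAlgebra B] (A : StarSubalgebra ℂ B)
    (hA : IsClosed (A : Set B)) (T : A →ₗ[ℂ] B) (hcont : Continuous T)
    (hT : ∀ a b : A, (a : B) * (b : B) = 0 → T a * (b : B) + (a : B) * T b = 0) :
    ∀ x y : A, T (x * y) = T x * (y : B) + (x : B) * T y - (x : B) * T 1 * (y : B) := by
  let Tc : A →L[ℂ] B := ⟨T, hcont⟩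
  let ι : A →L[ℂ] B := ⟨A.subtype.toLinearMap, continuous_subtype_val⟩
  let φ : A →L[ℂ] A →L[ℂ] B := (ContinuousLinearMap.mul ℂ B).bilinearComp Tc ι +
    (ContinuousLinearMap.mul ℂ B).bilinearComp ι Tc
  have hφ (a b : A) (hab : a * b = 0) : φ a b = 0 :=
    hT a b (by simpa using congrArg Subtype.val hab)
  intro x y
  have h1 := apply_mul_one_eq_apply φ hφ x y
  have h2 := apply_mul_one_eq_apply φ hφ 1 y
  have hι (a : A) : ι a = a := rfl
  simp only [add_apply, ContinuousLinearMap.bilinearComp_apply, ContinuousLinearMap.coe_mk', hι,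
    OneMemClass.coe_one, ContinuousLinearMap.mul_apply', mul_one, MulMemClass.coe_mul, one_mul, φ,
    Tc] at h1 h2
  have hcomm : (y : B) * T 1 = T 1 * y := add_left_cancel (h2.trans (add_comm _ _))
  rw [mul_assoc (x : B), ← hcomm, ← mul_assoc, ← h1, add_sub_cancel_right]
end

section
/- Let A be a unital C*-algebra, let B be a C*-algebra, and let T : A → B be a linear map which is a triple homomorphism at the unit 1 of A. Then (a) T(1) is a partial isometry, i.e., T(1)T(1)*T(1) = T(1); and (b) for every projection p ∈ A (p = p² = p*), the identity {T(p),T(1),T(p)} = {T(p),T(1),T(1)} holds. -/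
/-- If `T : A → B` is a linear map between C*-algebras (`A` unital) which is a triple
homomorphism at the unit of `A`, then `T(1)` is a partial isometry and
`{T(p),T(1),T(p)} = {T(p),T(1),T(1)}` for every projection `p ∈ A`. -/
theorem stmt16 {A B : Type*} [CStarAlgebra A] [NonUnitalCStarAlgebra B] (T : A →ₗ[ℂ] B)
    (hT : ∀ a b c : A, trip a b c = 1 → trip (T a) (T b) (T c) = T 1) :
    T 1 * star (T 1) * T 1 = T 1 ∧
    (∀ p : A, p * p = p → star p = p →
      trip (T p) (T 1) (T p) = trip (T p) (T 1) (T 1)) := by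
  set e := T 1 with he
  have h111 : trip (1 : A) 1 1 = 1 := by
    simp only [trip, star_one, mul_one, one_mul]
    module
  have hpe : e * star e * e = e := by
    have h := hT 1 1 1 h111
    simp only [trip, ← he] at h
    refine Eq.trans ?_ h
    module
  refine ⟨hpe, fun p hp2 hps => ?_⟩
  have hq : trip ((2:ℂ) • p - 1) 1 ((2:ℂ) • p - 1) = 1 := by
    have hsq : ((2:ℂ) • p - 1) * ((2:ℂ) • p - 1) = 1 := by
      simp only [mul_sub, sub_mul, one_mul, mul_one, smul_mul_assoc, mul_smul_comm, hp2,
        smul_smul]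
      module
    simp only [trip, star_one, mul_one, hsq]
    module
  have h := hT _ _ _ hq
  have hTq : T ((2:ℂ) • p - 1) = (2:ℂ) • T p - e := by
    simp [he]
  rw [hTq, ← he] at h
  simp only [trip] at h ⊢
  set x := T p with hx
  have hexp : ((2:ℂ) • x - e) * star e * ((2:ℂ) • x - e) =
      (4:ℂ) • (x * star e * x) - (2:ℂ) • (x * star e * e) - (2:ℂ) • (e * star e * x)
        + e * star e * e := by
    simp only [sub_mul, mul_sub, smul_mul_assoc, mul_smul_comm, smul_smul, smul_sub]
    norm_num
    abel
  rw [hexp, hpe] at h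
  have hY : (4:ℂ) • (x * star e * x) - (2:ℂ) • (x * star e * e)
      - (2:ℂ) • (e * star e * x) + e = e := by
    refine Eq.trans ?_ h
    module
  linear_combination (norm := module) (4:ℂ)⁻¹ • hY
end

section
/- Let A be a unital C*-algebra, let B be a C*-algebra, and let T : A → B be a continuous linear map which is a triple homomorphism at the unit 1 of A. Then {T(x*),T(1),T(1)} = {T(1),T(x),T(1)} for all x ∈ A. Consequently, e := T(1) is a partial isometry and the Peirce-1 component of T(x) relative to e vanishes for every x ∈ A, that is, e e* T(x) = e e* T(x) e* e and T(x) e* e = e e* T(x) e* e for all x ∈ A. -/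
open Filter Topology

section Algebra

variable {R : Type*} [NonUnitalRing R] [Module ℂ R] [Star R]

theorem two_smul_trip (a b c : R) : (2 : ℂ) • trip a b c = a * star b * c + c * star b * a := by
  rw [trip, smul_smul, mul_inv_cancel₀ two_ne_zero, one_smul]

theorem trip_eq_of_eq {a b c z : R} (h₁ : a * star b * c = z) (h₂ : c * star b * a = z) :
    trip a b c = z := by
  rw [trip, h₁, h₂, ← two_smul ℂ z, smul_smul, inv_mul_cancel₀ two_ne_zero, one_smul]

theorem trip_self (a : R) : trip a a a = a * star a * a :=
  trip_eq_of_eq rfl rfl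

theorem mul_star_mul_eq_of_trip_eq {e x y : R} (he : e * star e * e = e)
    (h : trip x e e = trip e y e) :
    e * star e * x = e * star e * x * star e * e ∧ x * star e * e = e * star e * x * star e * e := by
  have he_right : e * (star e * e) = e := by rw [← mul_assoc, he]
  have he_left (z : R) : e * (star e * (e * z)) = e * z := by rw [← mul_assoc, ← mul_assoc, he]
  have h2 := congrArg ((2 : ℂ) • ·) h
  simp only [two_smul_trip, mul_assoc] at h2
  have h_right := congrArg (· * (star e * e)) h2
  have h_left := congrArg (e * star e * ·) h2
  simp only [add_mul, mul_add, mul_assoc, he_right, he_left] at h_right h_left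
  constructor
  · simp only [mul_assoc]
    exact (add_left_cancel (h_right.trans h2.symm)).symm
  · simp only [mul_assoc]
    exact (add_right_cancel (h_left.trans h2.symm)).symm

end Algebra

theorem trip_sub_smul_add_star_smul {R : Type*} [NonUnitalRing R] [StarRing R] [Module ℂ R]
    [StarModule ℂ R] [IsScalarTower ℂ R R] [SMulCommClass ℂ R R] (a c p q u : R) (t : ℂ) :
    trip (a - t • p) (a + star t • q) (c + (t * t) • u) =
      trip a a c + t • (trip a q c - trip p a c +
        t • (trip (a - t • p) (a + star t • q) u - trip p q c)) := by
  simp only [trip, star_add, star_smul, star_star, mul_add, add_mul, sub_mul, mul_sub,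
    smul_mul_assoc, mul_smul_comm, smul_add, smul_sub, smul_smul]
  module

theorem eq_zero_of_eventually_smul_add_smul_eq_zero {𝕜 E : Type*} [NontriviallyNormedField 𝕜]
    [NormedAddCommGroup E] [NormedSpace 𝕜 E] {v : E} {w : 𝕜 → E} (hw : ContinuousAt w 0)
    (h : ∀ᶠ t in 𝓝 0, t • (v + t • w t) = 0) : v = 0 := by
  have hzero : ∀ᶠ t in 𝓝[≠] 0, v + t • w t = 0 := by
    filter_upwards [nhdsWithin_le_nhds h, self_mem_nhdsWithin] with t ht ht0
    exact (smul_eq_zero.mp ht).resolve_left ht0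
  have hlim : Tendsto (fun t : 𝕜 => v + t • w t) (𝓝[≠] 0) (𝓝 v) := by
    have hcont : ContinuousAt (fun t : 𝕜 => v + t • w t) 0 :=
      continuousAt_const.add (continuousAt_id.smul hw)
    simpa using hcont.tendsto.mono_left nhdsWithin_le_nhds
  exact tendsto_nhds_unique hlim (tendsto_const_nhds.congr' (hzero.mono fun t ht => ht.symm))

theorem map_one_mul_star_mul_map_one {A B : Type*} [Ring A] [StarRing A] [Module ℂ A]
    [NonUnitalRing B] [Module ℂ B] [Star B] (T : A →ₗ[ℂ] B)
    (hT : ∀ a b c : A, trip a b c = 1 → trip (T a) (T b) (T c) = T 1) :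
    T 1 * star (T 1) * T 1 = T 1 := by
  rw [← trip_self]
  exact hT 1 1 1 (by rw [trip_self, star_one, mul_one, mul_one])

section TripleHomAtOne

variable {A B : Type*} [NormedRing A] [CompleteSpace A] [NormedAlgebra ℂ A] [StarRing A]
  [StarModule ℂ A]
  [NonUnitalNormedRing B] [NormedSpace ℂ B] [IsScalarTower ℂ B B] [SMulCommClass ℂ B B]
  [StarRing B] [StarModule ℂ B] [ContinuousStar B]

theorem trip_map_star_map_one_map_one (T : A →ₗ[ℂ] B) (hcont : Continuous T)
    (hT : ∀ a b c : A, trip a b c = 1 → trip (T a) (T b) (T c) = T 1) (x : A) :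
    trip (T (star x)) (T 1) (T 1) = trip (T 1) (T x) (T 1) := by
  set y := star x * star x
  set c : ℂ → A := fun t => Ring.inverse (1 - (t * t) • y)
  have hunit : ∀ᶠ t in 𝓝 (0 : ℂ), IsUnit (1 - (t * t) • y) := by
    have hs : ContinuousAt (fun t : ℂ => 1 - (t * t) • y) 0 := by fun_prop
    refine hs.eventually ?_
    simp only [mul_zero, zero_smul, sub_zero]
    exact Units.isOpen.mem_nhds isUnit_one
  have hc : ContinuousAt c 0 :=
    (NormedRing.inverse_continuousAt 1).comp_of_eq (by fun_prop) (by simp)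
  set w : ℂ → B := fun t => trip (T 1 - t • T (star x)) (T 1 + star t • T x) (T (y * c t)) -
    trip (T (star x)) (T x) (T 1)
  have hw : ContinuousAt w 0 := by
    have hu : ContinuousAt (fun t => T (y * c t)) 0 :=
      hcont.continuousAt.comp (continuousAt_const.mul hc)
    simp only [w, trip]
    fun_prop
  have hexp : ∀ᶠ t in 𝓝 0,
      t • (trip (T 1) (T x) (T 1) - trip (T (star x)) (T 1) (T 1) + t • w t) = 0 := by
    filter_upwards [hunit] with t ht
    have hfactor : (1 - t • star x) * (1 + t • star x) = 1 - (t * t) • y ∧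
        (1 + t • star x) * (1 - t • star x) = 1 - (t * t) • y := by
      constructor <;>
      · simp only [y, mul_add, mul_sub, add_mul, sub_mul, one_mul, mul_one, smul_mul_assoc,
          mul_smul_comm]
        module
    have hstar : star (1 + star t • x) = 1 + t • star x := by simp [star_smul]
    have htrip : trip (1 - t • star x) (1 + star t • x) (c t) = 1 := by
      apply trip_eq_of_eq
      · rw [hstar, hfactor.1]; exact Ring.mul_inverse_cancel _ ht
      · rw [hstar, mul_assoc, hfactor.2]; exact Ring.inverse_mul_cancel _ ht
    have hTc : T (c t) = T 1 + (t * t) • T (y * c t) := by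
      have hinv := Ring.mul_inverse_cancel _ ht
      rw [sub_mul, one_mul, sub_eq_iff_eq_add] at hinv
      rw [← map_smul, ← smul_mul_assoc, ← map_add, ← hinv]
    have hB := hT _ _ _ htrip
    rw [map_sub, map_add, map_smul, map_smul, hTc, trip_sub_smul_add_star_smul, trip_self,
      map_one_mul_star_mul_map_one T hT] at hB
    exact add_eq_left.mp hB
  have hK := eq_zero_of_eventually_smul_add_smul_eq_zero hw hexp
  exact (sub_eq_zero.mp hK).symm

end TripleHomAtOne

/-- If `T : A → B` is a continuous linear map between C*-algebras (`A` unital) which is a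
triple homomorphism at the unit of `A`, then `{T(x*),T(1),T(1)} = {T(1),T(x),T(1)}` for all
`x ∈ A`; consequently `e := T(1)` is a partial isometry and the Peirce-1 component of every
`T(x)` relative to `e` vanishes: `e e* T(x) = e e* T(x) e* e` and
`T(x) e* e = e e* T(x) e* e`. -/
theorem stmt17 {A B : Type*} [CStarAlgebra A] [NonUnitalCStarAlgebra B] (T : A →ₗ[ℂ] B)
    (hcont : Continuous T)
    (hT : ∀ a b c : A, trip a b c = 1 → trip (T a) (T b) (T c) = T 1) :
    (∀ x : A, trip (T (star x)) (T 1) (T 1) = trip (T 1) (T x) (T 1)) ∧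
    T 1 * star (T 1) * T 1 = T 1 ∧
    (∀ x : A,
      T 1 * star (T 1) * T x = T 1 * star (T 1) * T x * star (T 1) * T 1 ∧
      T x * star (T 1) * T 1 = T 1 * star (T 1) * T x * star (T 1) * T 1) := by
  have hpi := map_one_mul_star_mul_map_one T hT
  have hsymm := trip_map_star_map_one_map_one T hcont hT
  refine ⟨hsymm, hpi, fun x => mul_star_mul_eq_of_trip_eq (y := T (star x)) hpi ?_⟩
  simpa using hsymm (star x)
end
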